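/- Let c : [0,1] → [0,1] be L-Lipschitz, let N be a power of 2, and let D = {(x,k) ∈ [0,N)² : k < N·c(x/N)}. In the dyadic quadtree decomposition of D (boxes fully inside D kept, boxes intersecting the boundary subdivided), the number of retained boxes of side length s is at most C·(L+1)·N/s for an absolute constant C. -/

import Mathlib

/-!
A retained box in column `i` lies below the graph of `x ↦ N c(x/N)` at its lower left corner,
while the parent of any retained box in the same column reaches above that graph somewhere within
horizontal distance `2s`. Since the graph rises by at most `2Ls` over that distance, the rows of
the retained boxes in one column span fewer than `2L + 2` box heights, so each of the `N/s`
columns holds at most `⌈2L + 2⌉` of them. The last column, whose parent may stick out of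
`[0, N)²`, is bounded trivially by `N/s`.
-/

open Set

open scoped NNReal

def gridSquare (a b w s : ℕ) : Set (ℝ × ℝ) :=
  Ico ((a : ℝ) * s) ((a + w : ℕ) * s) ×ˢ Ico ((b : ℝ) * s) ((b + w : ℕ) * s)

def subgraphRegion (c : ℝ → ℝ) (N : ℕ) : Set (ℝ × ℝ) :=
  {p | 0 ≤ p.1 ∧ p.1 < N ∧ 0 ≤ p.2 ∧ p.2 < N * c (p.1 / N)}

def retainedBoxes (D : Set (ℝ × ℝ)) (N s : ℕ) : Set (ℕ × ℕ) :=
  {ij | ij.1 * s < N ∧ ij.2 * s < N ∧ gridSquare ij.1 ij.2 1 s ⊆ D ∧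
    ¬ gridSquare (2 * (ij.1 / 2)) (2 * (ij.2 / 2)) 2 s ⊆ D}

theorem LipschitzOnWith.mul_comp_div_le {K : ℝ≥0} {c : ℝ → ℝ}
    (hc : LipschitzOnWith K c (Icc 0 1)) {N x y : ℝ} (hN : 0 < N)
    (hx : x ∈ Icc 0 N) (hy : y ∈ Icc 0 N) :
    N * c (x / N) ≤ N * c (y / N) + K * |x - y| := by
  have hx' : x / N ∈ Icc (0 : ℝ) 1 := ⟨div_nonneg hx.1 hN.le, (div_le_one hN).2 hx.2⟩
  have hy' : y / N ∈ Icc (0 : ℝ) 1 := ⟨div_nonneg hy.1 hN.le, (div_le_one hN).2 hy.2⟩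
  have h := hc.dist_le_mul _ hx' _ hy'
  rw [Real.dist_eq, Real.dist_eq, ← sub_div, abs_div, abs_of_pos hN, mul_div_assoc'] at h
  have key := (le_abs_self _).trans h
  rw [le_div_iff₀ hN] at key
  linarith

theorem row_lt_of_subset_subgraphRegion_of_not_parent_subset {K : ℝ≥0} {c : ℝ → ℝ}
    (hc : LipschitzOnWith K c (Icc 0 1)) {N s i j j' : ℕ} (hs : 0 < s)
    (hi : (2 * (i / 2) + 2) * s ≤ N)
    (hbox : gridSquare i j' 1 s ⊆ subgraphRegion c N)
    (hpar : ¬ gridSquare (2 * (i / 2)) (2 * (j / 2)) 2 s ⊆ subgraphRegion c N) :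
    (j' : ℝ) < j + 2 + 2 * K := by
  have hs' : (0 : ℝ) < s := by exact_mod_cast hs
  have hi' : (2 * ((i / 2 : ℕ) : ℝ) + 2) * s ≤ N := by exact_mod_cast hi
  have hi_lo : 2 * ((i / 2 : ℕ) : ℝ) ≤ i := by exact_mod_cast Nat.mul_div_le i 2
  have hi_hi : (i : ℝ) ≤ 2 * ((i / 2 : ℕ) : ℝ) + 1 := by norm_cast; omega
  have hj_lo : 2 * ((j / 2 : ℕ) : ℝ) ≤ j := by exact_mod_cast Nat.mul_div_le j 2
  have hN : (0 : ℝ) < N := by nlinarith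
  obtain ⟨-, -, -, hcorner⟩ : ((i : ℝ) * s, (j' : ℝ) * s) ∈ subgraphRegion c N :=
    hbox ⟨⟨le_rfl, by push_cast; linarith⟩, ⟨le_rfl, by push_cast; linarith⟩⟩
  obtain ⟨p, ⟨⟨hp1, hp1'⟩, hp2, hp2'⟩, hpD⟩ := not_subset.mp hpar
  push_cast at hp1 hp1' hp2 hp2'
  have hpx : p.1 ∈ Icc 0 (N : ℝ) := ⟨by nlinarith, by linarith⟩
  have hbelow : N * c (p.1 / N) ≤ p.2 :=
    not_lt.mp fun h => hpD ⟨hpx.1, by linarith, by nlinarith, h⟩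
  have hlip := hc.mul_comp_div_le (x := i * s) hN ⟨by positivity, by nlinarith⟩ hpx
  have hdist : |(i : ℝ) * s - p.1| ≤ 2 * s := abs_le.mpr ⟨by nlinarith, by nlinarith⟩
  have hrow : (j' : ℝ) * s < (j + 2 + 2 * K) * s := by
    nlinarith [mul_le_mul_of_nonneg_left hdist K.coe_nonneg]
  exact lt_of_mul_lt_mul_right hrow hs'.le

theorem Finset.card_le_natCeil_of_forall_lt_add {S : Finset ℕ} {r : ℝ}
    (h : ∀ a ∈ S, ∀ b ∈ S, (b : ℝ) < a + r) : S.card ≤ ⌈r⌉₊ := by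
  rcases S.eq_empty_or_nonempty with rfl | hne
  · simp
  set m := S.min' hne
  have hsub : S ⊆ Finset.Ico m (m + ⌈r⌉₊) := fun b hb => by
    have hb' : (b : ℝ) < m + ⌈r⌉₊ := (h m (S.min'_mem hne) b hb).trans_le
      (add_le_add_right (Nat.le_ceil r) _)
    exact Finset.mem_Ico.2 ⟨S.min'_le b hb, by exact_mod_cast hb'⟩
  simpa using Finset.card_le_card hsub

theorem Finset.card_filter_range_product_le {p : ℕ × ℕ → Prop} [DecidablePred p] {M : ℕ}
    {r : ℝ} (h : ∀ i j j', i + 1 < M → p (i, j) → p (i, j') → (j' : ℝ) < j + r) :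
    ((Finset.range M ×ˢ Finset.range M).filter p).card ≤ M * (⌈r⌉₊ + 1) := by
  rw [Finset.card_filter, Finset.sum_product]
  simp_rw [← Finset.card_filter]
  cases M with
  | zero => simp
  | succ M =>
    rw [Finset.sum_range_succ]
    have hcol : ∀ i ∈ Finset.range M,
        ((Finset.range (M + 1)).filter fun j => p (i, j)).card ≤ ⌈r⌉₊ := fun i hi =>
      Finset.card_le_natCeil_of_forall_lt_add fun j hj j' hj' =>
        h i j j' (by rw [Finset.mem_range] at hi; omega) (Finset.mem_filter.1 hj).2
          (Finset.mem_filter.1 hj').2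
    have hcols := Finset.sum_le_card_nsmul _ _ _ hcol
    rw [Finset.card_range, smul_eq_mul] at hcols
    have hlast := (Finset.card_filter_le (Finset.range (M + 1)) fun j => p (M, j)).trans
      (Finset.card_range _).le
    nlinarith

theorem ncard_retainedBoxes_subgraphRegion_le {K : ℝ≥0} {c : ℝ → ℝ}
    (hc : LipschitzOnWith K c (Icc 0 1)) {s M : ℕ} (hs : 0 < s) :
    (retainedBoxes (subgraphRegion c (s * M)) (s * M) s).ncard
      ≤ M * (⌈2 * (K : ℝ) + 2⌉₊ + 1) := by
  classical
  set S := retainedBoxes (subgraphRegion c (s * M)) (s * M) s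
  have hS : S ⊆ ↑((Finset.range M ×ˢ Finset.range M).filter (· ∈ S)) := fun ij hij => by
    have ⟨h1, h2, _⟩ := hij
    simp only [Finset.coe_filter, Finset.mem_product, Finset.mem_range, mem_ofPred_eq]
    exact ⟨⟨by nlinarith, by nlinarith⟩, hij⟩
  refine (ncard_le_ncard hS (Finset.finite_toSet _)).trans ?_
  rw [ncard_coe_finset]
  refine Finset.card_filter_range_product_le fun i j j' hi hij hij' => ?_
  have h := row_lt_of_subset_subgraphRegion_of_not_parent_subset hc hs
    (by rw [mul_comm s M]; exact Nat.mul_le_mul_right s (by omega)) hij'.2.2.1 hij.2.2.2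
  rwa [add_assoc, add_comm 2] at h

/-- In the dyadic quadtree decomposition of the subgraph region
`D = {(x,k) ∈ [0,N)² : k < N·c(x/N)}` of an `L`-Lipschitz function `c`, the number
of retained boxes of side length `s` (boxes fully inside `D` whose parent box of
side `2s` is not fully inside `D`) is at most `C·(L+1)·N/s` for an absolute
constant `C`. -/
theorem quadtree_box_count_bound :
    ∃ C : ℝ, 0 < C ∧
      ∀ (L : ℝ), 0 ≤ L →
      ∀ (c : ℝ → ℝ), LipschitzOnWith (Real.toNNReal L) c (Set.Icc (0:ℝ) 1) →
        (∀ t ∈ Set.Icc (0:ℝ) 1, c t ∈ Set.Icc (0:ℝ) 1) →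
      ∀ (N : ℕ), (∃ n : ℕ, N = 2 ^ n) →
      ∀ (s : ℕ), (∃ j : ℕ, s = 2 ^ j) → s ∣ N → 0 < s →
      ∀ (D : Set (ℝ × ℝ)),
        D = {p : ℝ × ℝ | 0 ≤ p.1 ∧ p.1 < N ∧ 0 ≤ p.2 ∧ p.2 < N * c (p.1 / N)} →
      ({ij : ℕ × ℕ |
          ij.1 * s < N ∧ ij.2 * s < N ∧
          (Set.Ico ((ij.1 : ℝ) * s) ((ij.1 + 1 : ℕ) * s) ×ˢ
            Set.Ico ((ij.2 : ℝ) * s) ((ij.2 + 1 : ℕ) * s)) ⊆ D ∧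
          ¬ (Set.Ico (((2 * (ij.1 / 2) : ℕ) : ℝ) * s) (((2 * (ij.1 / 2) + 2 : ℕ) : ℝ) * s) ×ˢ
             Set.Ico (((2 * (ij.2 / 2) : ℕ) : ℝ) * s) (((2 * (ij.2 / 2) + 2 : ℕ) : ℝ) * s)) ⊆ D
        }).ncard ≤ C * (L + 1) * N / s := by
  refine ⟨4, by norm_num, fun L hL c hc _ N _ s _ hsN hs D hD => ?_⟩
  obtain ⟨M, rfl⟩ := hsN
  subst hD
  set S := retainedBoxes (subgraphRegion c (s * M)) (s * M) s
  change (S.ncard : ℝ) ≤ _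
  have hcount : (S.ncard : ℝ) ≤ M * (⌈2 * L + 2⌉₊ + 1) := by
    have h := ncard_retainedBoxes_subgraphRegion_le hc hs (M := M)
    rw [Real.coe_toNNReal L hL] at h
    exact_mod_cast h
  have hceil : (⌈2 * L + 2⌉₊ : ℝ) < 2 * L + 3 := by
    linarith [Nat.ceil_lt_add_one (show 0 ≤ 2 * L + 2 by linarith)]
  rw [Nat.cast_mul, mul_div_assoc, mul_div_cancel_left₀ _ (by positivity)]
  nlinarith [(M.cast_nonneg : (0 : ℝ) ≤ M)]
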